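/- Let A be a rational map of the Riemann sphere of degree at least two. Then there exists at most one orbifold O on ℂP¹ with Euler characteristic χ(O) = 0 such that A : O → O is a minimal holomorphic map between orbifolds. -/

import Mathlib

/-!
For a rational map `f` of degree `d` and orbifolds `O₁`, `O₂`, the Riemann–Hurwitz formula reads
`χ(O₁) - d χ(O₂) = ∑ z, (1/ν₁(z) - deg_z f / ν₂(f z))`. If `f : O₁ → O₂` is minimal holomorphic,
then `1/ν₁(z) = gcd(deg_z f, ν₂(f z)) / ν₂(f z)`, so every term is `≤ 0`, with equality exactly
where `ν₂(f z) = ν₁(z) deg_z f`. Hence a minimal holomorphic `f : O → O` with `χ(O) = 0` is a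
covering. If `f` is a covering `O₁ → O₁` and `O₂ → O₂`, the finite set `D = {ν₁ ≠ ν₂}` is completely
invariant, and pulling back `1/ν₁` restricted to `D` gives `∑_D 1/ν₁ = d ∑_D 1/ν₁`; as `d ≥ 2`,
`D` is empty.

Local degrees are multiplicities of roots of `num - w·denom` (reflected at `∞`), and
`∑ (deg_z f - 1) = 2d - 2` comes from the Wronskian of `num` and `denom`.
-/

open Polynomial OnePoint
open scoped Classical

noncomputable section

namespace GenLattes

/-- Composition of rational functions: `rcomp f g = f ∘ g`. -/
def rcomp (f g : RatFunc ℂ) : RatFunc ℂ :=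
  Polynomial.aeval g f.num / Polynomial.aeval g f.denom

/-- The degree of a rational function: the maximum of the degrees of its numerator and
denominator in lowest terms. -/
def rdeg (f : RatFunc ℂ) : ℕ := max f.num.natDegree f.denom.natDegree

/-- Evaluation of a rational function at a finite point, with value in the Riemann
sphere `ℂP¹ = OnePoint ℂ`. -/
def evalF (f : RatFunc ℂ) (z : ℂ) : OnePoint ℂ :=
  if f.denom.eval z = 0 then ∞ else ((f.num.eval z / f.denom.eval z : ℂ) : OnePoint ℂ)

/-- The local degree (local multiplicity) of a rational function at a finite point. -/
def locDegF (f : RatFunc ℂ) (z : ℂ) : ℕ :=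
  if f.denom.eval z = 0 then rootMultiplicity z f.denom
  else rootMultiplicity z (f.num - Polynomial.C (f.num.eval z / f.denom.eval z) * f.denom)

/-- The rational function `f(1/X)`. -/
def flip (f : RatFunc ℂ) : RatFunc ℂ := rcomp f (RatFunc.X)⁻¹

/-- The self-map of the Riemann sphere `ℂP¹ = OnePoint ℂ` induced by a rational function. -/
def evalOP (f : RatFunc ℂ) (x : OnePoint ℂ) : OnePoint ℂ :=
  OnePoint.rec (evalF (flip f) 0) (fun z => evalF f z) x

/-- The local degree `deg_x f` of a rational function at a point of the Riemann sphere. -/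
def locDeg (f : RatFunc ℂ) (x : OnePoint ℂ) : ℕ :=
  OnePoint.rec (locDegF (flip f) 0) (fun z => locDegF f z) x

/-- The iterate `f^{∘l}` of a rational function (with `riter f 0 = X = id`). -/
def riter (f : RatFunc ℂ) : ℕ → RatFunc ℂ
  | 0 => RatFunc.X
  | l + 1 => rcomp f (riter f l)

/-- An orbifold on the Riemann sphere: a ramification function `ν : ℂP¹ → ℕ` with
`ν(z) ≥ 1` everywhere and `ν(z) = 1` outside a finite set. -/
structure Orbifold where
  nu : OnePoint ℂ → ℕ
  one_le : ∀ z, 1 ≤ nu z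
  finite : {z : OnePoint ℂ | nu z ≠ 1}.Finite

/-- A good orbifold: it is forbidden to have exactly one point with `ν > 1`, or exactly
two such points with different values of `ν`. -/
def Orbifold.Good (O : Orbifold) : Prop :=
  (¬ ∃ z, {w : OnePoint ℂ | O.nu w ≠ 1} = {z}) ∧
  (¬ ∃ z₁ z₂, z₁ ≠ z₂ ∧ {w : OnePoint ℂ | O.nu w ≠ 1} = {z₁, z₂} ∧ O.nu z₁ ≠ O.nu z₂)

/-- A nontrivial orbifold (distinct from the non-ramified sphere). -/
def Orbifold.IsNontrivial (O : Orbifold) : Prop := ∃ z, 1 < O.nu z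

/-- The relation `O₁ ⪯ O₂`: pointwise divisibility of ramification functions. -/
def Orbifold.Prec (O₁ O₂ : Orbifold) : Prop := ∀ z, O₁.nu z ∣ O₂.nu z

/-- The signature of an orbifold: the multiset of values of `ν` on `c(O) = {ν > 1}`. -/
def Orbifold.signature (O : Orbifold) : Multiset ℕ := O.finite.toFinset.val.map O.nu

/-- The Euler characteristic `χ(O) = 2 + Σ (1/ν(z) - 1)`. -/
def Orbifold.eulerChar (O : Orbifold) : ℚ :=
  2 + ∑ z ∈ O.finite.toFinset, ((O.nu z : ℚ)⁻¹ - 1)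

/-- `A : O₁ → O₂` is a holomorphic map between orbifolds:
`ν₂(A(z)) ∣ ν₁(z)·deg_z A` for all `z`. -/
def IsHolo (A : RatFunc ℂ) (O₁ O₂ : Orbifold) : Prop :=
  ∀ z, O₂.nu (evalOP A z) ∣ O₁.nu z * locDeg A z

/-- `A : O₁ → O₂` is a minimal holomorphic map between orbifolds:
`ν₂(A(z)) = ν₁(z)·gcd(deg_z A, ν₂(A(z)))` for all `z`. -/
def IsMinHolo (A : RatFunc ℂ) (O₁ O₂ : Orbifold) : Prop :=
  ∀ z, O₂.nu (evalOP A z) = O₁.nu z * Nat.gcd (locDeg A z) (O₂.nu (evalOP A z))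

/-- `A : O₁ → O₂` is a covering map between orbifolds:
`ν₂(A(z)) = ν₁(z)·deg_z A` for all `z`. -/
def IsCovering (A : RatFunc ℂ) (O₁ O₂ : Orbifold) : Prop :=
  ∀ z, O₂.nu (evalOP A z) = O₁.nu z * locDeg A z

/-- `A` and `B` are conjugate by a Möbius transformation: `A = μ ∘ B ∘ μ⁻¹`. -/
def Conjugate (A B : RatFunc ℂ) : Prop :=
  ∃ μ ν : RatFunc ℂ, rcomp μ ν = RatFunc.X ∧ rcomp ν μ = RatFunc.X ∧
    A = rcomp (rcomp μ B) ν

/-- The Chebyshev polynomial `T_d` viewed as a rational function. -/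
def chebyRF (d : ℕ) : RatFunc ℂ :=
  algebraMap (Polynomial ℂ) (RatFunc ℂ) (Polynomial.Chebyshev.T ℂ d)

end GenLattes

namespace Polynomial

section CommRing

variable {R : Type*} [CommRing R]

theorem rootMultiplicity_neg (p : R[X]) (z : R) :
    rootMultiplicity z (-p) = rootMultiplicity z p := by
  rcases eq_or_ne p 0 with rfl | hp
  · simp
  exact le_antisymm (rootMultiplicity_le_rootMultiplicity_of_dvd hp (neg_dvd.2 dvd_rfl) z)
    (rootMultiplicity_le_rootMultiplicity_of_dvd (neg_ne_zero.2 hp) (dvd_neg.2 dvd_rfl) z)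

theorem rootMultiplicity_add_of_dvd {p q : R[X]} {z : R} (hp : p ≠ 0)
    (hq : (X - C z) ^ (rootMultiplicity z p + 1) ∣ q) :
    rootMultiplicity z (p + q) = rootMultiplicity z p := by
  have hpq : p + q ≠ 0 := fun h => pow_rootMultiplicity_not_dvd hp z <| by
    simpa [eq_neg_of_add_eq_zero_left h] using hq
  refine le_antisymm ((rootMultiplicity_le_iff hpq _ _).2 fun h => ?_)
    ((le_rootMultiplicity_iff hpq).2 (dvd_add (pow_rootMultiplicity_dvd p z)
      ((pow_dvd_pow _ (Nat.le_succ _)).trans hq)))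
  exact pow_rootMultiplicity_not_dvd hp z (by simpa using dvd_sub h hq)

theorem wronskian_sub_C_mul_left (p q : R[X]) (c : R) :
    wronskian (p - C c * q) q = wronskian p q := by
  simp only [wronskian, derivative_sub, derivative_mul, derivative_C]
  ring

end CommRing

section Field

variable {K : Type*} [Field K]

theorem rootMultiplicity_zero_reflect {r : K[X]} (hr : r ≠ 0) {N : ℕ} (h : r.natDegree ≤ N) :
    rootMultiplicity 0 (reflect N r) = N - r.natDegree := by
  rw [rootMultiplicity_eq_natTrailingDegree']
  apply le_antisymm
  · apply natTrailingDegree_le_of_ne_zero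
    rw [coeff_reflect, revAt_le (Nat.sub_le _ _), Nat.sub_sub_self h]
    exact leadingCoeff_ne_zero.mpr hr
  · refine le_natTrailingDegree (reflect_eq_zero_iff.not.2 hr) (fun m hm => ?_)
    rw [coeff_reflect, revAt_le (le_trans hm.le (Nat.sub_le _ _))]
    exact coeff_eq_zero_of_natDegree_lt (by omega)

theorem sum_rootMultiplicity_roots_toFinset [IsAlgClosed K] (r : K[X]) :
    ∑ z ∈ r.roots.toFinset, rootMultiplicity z r = r.natDegree := by
  rw [Finset.sum_congr rfl fun z _ => (count_roots r).symm, Multiset.toFinset_sum_count_eq]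
  exact splits_iff_card_roots.mp (IsAlgClosed.splits r)

variable [CharZero K]

theorem rootMultiplicity_wronskian_add_one {P Q : K[X]} {z : K} (hP : P ≠ 0) (hz : P.IsRoot z)
    (hQ : ¬ Q.IsRoot z) : rootMultiplicity z (wronskian Q P) + 1 = rootMultiplicity z P := by
  have hQ0 : Q ≠ 0 := by rintro rfl; exact hQ (by simp)
  have hP' : derivative P ≠ 0 := fun h => hP <| by
    rw [eq_C_of_derivative_eq_zero h] at hz ⊢
    simpa using hz
  have hW : wronskian Q P = derivative P * Q + -(derivative Q * P) := by
    rw [wronskian]; ring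
  have hmul : rootMultiplicity z (derivative P * Q) + 1 = rootMultiplicity z P := by
    rw [rootMultiplicity_mul (mul_ne_zero hP' hQ0), rootMultiplicity_eq_zero hQ,
      derivative_rootMultiplicity_of_root hz, add_zero,
      Nat.sub_add_cancel ((rootMultiplicity_pos hP).2 hz)]
  have hdvd : (X - C z) ^ (rootMultiplicity z (derivative P * Q) + 1) ∣ -(derivative Q * P) := by
    rw [hmul]
    exact (pow_rootMultiplicity_dvd P z).trans (dvd_neg.2 (dvd_mul_left _ _))
  rw [hW, rootMultiplicity_add_of_dvd (mul_ne_zero hP' hQ0) hdvd, hmul]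

theorem coeff_mul_derivative_natDegree_add_sub_one (a b : K[X]) :
    (a * derivative b).coeff (a.natDegree + b.natDegree - 1)
      = b.natDegree * a.leadingCoeff * b.leadingCoeff := by
  rcases Nat.eq_zero_or_pos b.natDegree with hb | hb
  · simp [derivative_of_natDegree_zero hb, hb]
  rw [show a.natDegree + b.natDegree - 1 = a.natDegree + (b.natDegree - 1) by omega,
    coeff_mul_add_eq_of_natDegree_le le_rfl (natDegree_derivative_le b),
    coeff_derivative, Nat.sub_add_cancel hb, leadingCoeff, leadingCoeff]
  rw [Nat.cast_sub hb]; push_cast; ring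

theorem natDegree_wronskian {a b : K[X]} (ha : a ≠ 0) (hb : b ≠ 0)
    (hab : a.natDegree ≠ b.natDegree) :
    wronskian a b ≠ 0 ∧ (wronskian a b).natDegree = a.natDegree + b.natDegree - 1 := by
  have hcoeff : (wronskian a b).coeff (a.natDegree + b.natDegree - 1)
      = (b.natDegree - a.natDegree : K) * a.leadingCoeff * b.leadingCoeff := by
    rw [wronskian, coeff_sub, coeff_mul_derivative_natDegree_add_sub_one, mul_comm (derivative a),
      add_comm a.natDegree, coeff_mul_derivative_natDegree_add_sub_one]
    ring
  have hne : (wronskian a b).coeff (a.natDegree + b.natDegree - 1) ≠ 0 := by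
    rw [hcoeff]
    refine mul_ne_zero (mul_ne_zero (sub_ne_zero.2 ?_) (leadingCoeff_ne_zero.2 ha))
      (leadingCoeff_ne_zero.2 hb)
    exact_mod_cast hab.symm
  have hW : wronskian a b ≠ 0 := fun h => hne (by rw [h, coeff_zero])
  exact ⟨hW, le_antisymm (Nat.le_sub_one_of_lt (natDegree_wronskian_lt_add hW))
    (le_natDegree_of_ne_zero hne)⟩

end Field

end Polynomial

namespace RatFunc

variable {K : Type*} [Field K]

theorem aeval_inv_X_mul_X_pow {p : K[X]} {N : ℕ} (hp : p.natDegree ≤ N) :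
    aeval (X : RatFunc K)⁻¹ p * X ^ N = algebraMap K[X] (RatFunc K) (reflect N p) := by
  let : Invertible (X : RatFunc K)⁻¹ := invertibleOfNonzero (inv_ne_zero X_ne_zero)
  have h := eval₂_reflect_mul_pow (algebraMap K (RatFunc K)) X⁻¹ N p hp
  rw [invOf_eq_inv, inv_inv] at h
  rw [aeval_def, ← h, ← aeval_def, aeval_X_left_eq_algebraMap, mul_assoc, inv_pow,
    inv_mul_cancel₀ (pow_ne_zero _ X_ne_zero), mul_one]

theorem not_isRoot_num_of_isRoot_denom {f : RatFunc K} {z : K} (h : f.denom.IsRoot z) :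
    ¬ f.num.IsRoot z := fun h' => by
  obtain ⟨u, v, huv⟩ := isCoprime_num_denom f
  simpa [h.eq_zero, h'.eq_zero] using congrArg (Polynomial.eval z) huv

theorem exists_eq_num_mul_and_eq_denom_mul (p q : K[X]) (hq : q ≠ 0) :
    ∃ k : K[X], p = (algebraMap K[X] (RatFunc K) p / algebraMap K[X] (RatFunc K) q).num * k ∧
      q = (algebraMap K[X] (RatFunc K) p / algebraMap K[X] (RatFunc K) q).denom * k := by
  have hc : (q / gcd p q).leadingCoeff ≠ 0 := leadingCoeff_ne_zero.2 (right_div_gcd_ne_zero hq)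
  have hg : gcd p q ≠ 0 := gcd_ne_zero_of_right hq
  refine ⟨Polynomial.C (q / gcd p q).leadingCoeff * gcd p q, ?_, ?_⟩
  · rw [num_div, mul_mul_mul_comm, ← Polynomial.C_mul, inv_mul_cancel₀ hc, Polynomial.C_1,
      one_mul, mul_comm, EuclideanDomain.mul_div_cancel' hg (gcd_dvd_left p q)]
  · rw [denom_div _ hq, mul_mul_mul_comm, ← Polynomial.C_mul, inv_mul_cancel₀ hc,
      Polynomial.C_1, one_mul, mul_comm, EuclideanDomain.mul_div_cancel' hg (gcd_dvd_right p q)]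

end RatFunc

namespace GenLattes

/-- The roots of `fiberPoly p q w` are the solutions of `p / q = w`; for `w = ∞` this is `q`. -/
def fiberPoly (p q : ℂ[X]) (w : OnePoint ℂ) : ℂ[X] :=
  OnePoint.rec q (fun c => p - C c * q) w

section FiberPoly

variable {p q : ℂ[X]}

@[simp]
lemma fiberPoly_infty : fiberPoly p q ∞ = q := rfl

@[simp]
lemma fiberPoly_coe (c : ℂ) : fiberPoly p q c = p - C c * q := rfl

lemma fiberPoly_mul_right (k : ℂ[X]) (w : OnePoint ℂ) :
    fiberPoly (p * k) (q * k) w = fiberPoly p q w * k := by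
  induction w using OnePoint.rec <;> simp [sub_mul, mul_assoc]

lemma reflect_fiberPoly (N : ℕ) (w : OnePoint ℂ) :
    reflect N (fiberPoly p q w) = fiberPoly (reflect N p) (reflect N q) w := by
  induction w using OnePoint.rec <;> simp [reflect_sub, reflect_C_mul]

end FiberPoly

section Evaluation

variable {f : RatFunc ℂ}

@[simp]
lemma evalOP_coe (z : ℂ) : evalOP f z = evalF f z := rfl

@[simp]
lemma locDeg_coe (z : ℂ) : locDeg f z = locDegF f z := rfl

lemma evalF_eq_iff_isRoot (z : ℂ) (w : OnePoint ℂ) :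
    evalF f z = w ↔ (fiberPoly f.num f.denom w).IsRoot z := by
  unfold evalF
  induction w using OnePoint.rec with
  | infty => split_ifs with h <;> simp [h]
  | coe c =>
    split_ifs with h
    · simpa [h] using RatFunc.not_isRoot_num_of_isRoot_denom h
    · simp [div_eq_iff h, sub_eq_zero]

lemma locDegF_eq_rootMultiplicity (z : ℂ) :
    locDegF f z = rootMultiplicity z (fiberPoly f.num f.denom (evalF f z)) := by
  unfold locDegF evalF
  split_ifs <;> rfl

lemma exists_fiberPoly_eq_mul_of_eq_div {p q : ℂ[X]} (hq : q ≠ 0)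
    (hf : f = algebraMap ℂ[X] (RatFunc ℂ) p / algebraMap ℂ[X] (RatFunc ℂ) q) {z : ℂ}
    (hz : ¬ (p.IsRoot z ∧ q.IsRoot z)) :
    ∃ k : ℂ[X], ¬ k.IsRoot z ∧ ∀ w, fiberPoly p q w = fiberPoly f.num f.denom w * k := by
  obtain ⟨k, hpk, hqk⟩ := RatFunc.exists_eq_num_mul_and_eq_denom_mul p q hq
  rw [← hf] at hpk hqk
  refine ⟨k, fun hk => hz ⟨?_, ?_⟩, fun w => by rw [← fiberPoly_mul_right, ← hpk, ← hqk]⟩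
  · rw [hpk]; simp [hk.eq_zero]
  · rw [hqk]; simp [hk.eq_zero]

lemma evalF_eq_iff_of_eq_div {p q : ℂ[X]} (hq : q ≠ 0)
    (hf : f = algebraMap ℂ[X] (RatFunc ℂ) p / algebraMap ℂ[X] (RatFunc ℂ) q) {z : ℂ}
    (hz : ¬ (p.IsRoot z ∧ q.IsRoot z)) (w : OnePoint ℂ) :
    evalF f z = w ↔ (fiberPoly p q w).IsRoot z := by
  obtain ⟨k, hk, hpq⟩ := exists_fiberPoly_eq_mul_of_eq_div hq hf hz
  rw [evalF_eq_iff_isRoot, hpq, IsRoot.def, IsRoot.def, eval_mul, mul_eq_zero]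
  exact (or_iff_left hk).symm

lemma locDegF_eq_of_eq_div {p q : ℂ[X]} (hq : q ≠ 0)
    (hf : f = algebraMap ℂ[X] (RatFunc ℂ) p / algebraMap ℂ[X] (RatFunc ℂ) q) {z : ℂ}
    (hz : ¬ (p.IsRoot z ∧ q.IsRoot z)) :
    locDegF f z = rootMultiplicity z (fiberPoly p q (evalF f z)) := by
  obtain ⟨k, hk, hpq⟩ := exists_fiberPoly_eq_mul_of_eq_div hq hf hz
  rw [locDegF_eq_rootMultiplicity, hpq]
  rcases eq_or_ne (fiberPoly f.num f.denom (evalF f z)) 0 with h0 | h0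
  · simp [h0]
  have hk0 : k ≠ 0 := by rintro rfl; exact hk (by simp)
  rw [rootMultiplicity_mul (mul_ne_zero h0 hk0), rootMultiplicity_eq_zero hk, add_zero]

lemma fiberPoly_ne_zero (hf : 0 < rdeg f) (w : OnePoint ℂ) : fiberPoly f.num f.denom w ≠ 0 := by
  induction w using OnePoint.rec with
  | infty => exact f.denom_ne_zero
  | coe c =>
    intro h
    have hc : f = algebraMap ℂ[X] (RatFunc ℂ) (C c) := by
      rw [← RatFunc.num_div_denom f, sub_eq_zero.1 h, map_mul,
        mul_div_cancel_right₀ _ (RatFunc.algebraMap_ne_zero f.denom_ne_zero)]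
    simp [rdeg, hc] at hf

lemma natDegree_fiberPoly_le (f : RatFunc ℂ) (w : OnePoint ℂ) :
    (fiberPoly f.num f.denom w).natDegree ≤ rdeg f := by
  induction w using OnePoint.rec with
  | infty => exact le_max_right _ _
  | coe c =>
    exact (natDegree_sub_le _ _).trans
      (max_le (le_max_left _ _) ((natDegree_C_mul_le _ _).trans (le_max_right _ _)))

end Evaluation

section Infinity

variable {f : RatFunc ℂ}

lemma flip_eq_div_reflect (f : RatFunc ℂ) :
    flip f = algebraMap ℂ[X] (RatFunc ℂ) (reflect (rdeg f) f.num)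
      / algebraMap ℂ[X] (RatFunc ℂ) (reflect (rdeg f) f.denom) := by
  rw [flip, rcomp, ← RatFunc.aeval_inv_X_mul_X_pow (N := rdeg f) (le_max_left _ _),
    ← RatFunc.aeval_inv_X_mul_X_pow (N := rdeg f) (le_max_right _ _),
    mul_div_mul_right _ _ (pow_ne_zero _ RatFunc.X_ne_zero)]

lemma not_isRoot_reflect_num_and_reflect_denom (f : RatFunc ℂ) :
    ¬ ((reflect (rdeg f) f.num).IsRoot 0 ∧ (reflect (rdeg f) f.denom).IsRoot 0) := by
  simp only [IsRoot.def, ← coeff_zero_eq_eval_zero, coeff_reflect, revAt_zero, not_and_or]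
  by_cases h : f.num.natDegree ≤ f.denom.natDegree
  · right
    rw [rdeg, max_eq_right h]
    exact leadingCoeff_ne_zero.2 f.denom_ne_zero
  · left
    rw [rdeg, max_eq_left (le_of_not_ge h)]
    exact leadingCoeff_ne_zero.2 fun h0 => h (by simp [h0])

lemma evalOP_infty_eq_iff (f : RatFunc ℂ) (w : OnePoint ℂ) :
    evalOP f ∞ = w ↔ (fiberPoly f.num f.denom w).coeff (rdeg f) = 0 := by
  refine (evalF_eq_iff_of_eq_div (reflect_eq_zero_iff.not.2 f.denom_ne_zero)
    (flip_eq_div_reflect f) (not_isRoot_reflect_num_and_reflect_denom f) w).trans ?_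
  rw [← reflect_fiberPoly, IsRoot.def, ← coeff_zero_eq_eval_zero, coeff_reflect, revAt_zero]

lemma locDeg_infty (hf : 0 < rdeg f) :
    locDeg f ∞ = rdeg f - (fiberPoly f.num f.denom (evalOP f ∞)).natDegree := by
  change locDegF (flip f) 0 = rdeg f - (fiberPoly f.num f.denom (evalF (flip f) 0)).natDegree
  rw [locDegF_eq_of_eq_div (reflect_eq_zero_iff.not.2 f.denom_ne_zero) (flip_eq_div_reflect f)
    (not_isRoot_reflect_num_and_reflect_denom f), ← reflect_fiberPoly,
    rootMultiplicity_zero_reflect (fiberPoly_ne_zero hf _) (natDegree_fiberPoly_le f _)]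

lemma natDegree_fiberPoly_evalOP_infty_lt (hf : 0 < rdeg f) :
    (fiberPoly f.num f.denom (evalOP f ∞)).natDegree < rdeg f := by
  refine (natDegree_fiberPoly_le f _).lt_of_ne fun h => fiberPoly_ne_zero hf (evalOP f ∞) ?_
  rw [← leadingCoeff_eq_zero, leadingCoeff, h, ← evalOP_infty_eq_iff]

end Infinity

section Fibers

variable {f : RatFunc ℂ}

lemma one_le_locDeg (hf : 0 < rdeg f) (x : OnePoint ℂ) : 1 ≤ locDeg f x := by
  induction x using OnePoint.rec with
  | infty =>
    have := natDegree_fiberPoly_evalOP_infty_lt hf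
    rw [locDeg_infty hf]
    omega
  | coe z =>
    rw [locDeg_coe, locDegF_eq_rootMultiplicity]
    exact (rootMultiplicity_pos (fiberPoly_ne_zero hf _)).2 ((evalF_eq_iff_isRoot z _).1 rfl)

def fiberFinset (f : RatFunc ℂ) (w : OnePoint ℂ) : Finset (OnePoint ℂ) :=
  (insert ∞ ((fiberPoly f.num f.denom w).roots.toFinset.image (↑))).filter (evalOP f · = w)

lemma mem_fiberFinset (hf : 0 < rdeg f) {w x : OnePoint ℂ} :
    x ∈ fiberFinset f w ↔ evalOP f x = w := by
  induction x using OnePoint.rec with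
  | infty => simp [fiberFinset]
  | coe z =>
    simp only [fiberFinset, Finset.mem_filter, Finset.mem_insert, Finset.mem_image,
      Multiset.mem_toFinset, mem_roots (fiberPoly_ne_zero hf w), OnePoint.coe_ne_infty,
      OnePoint.coe_eq_coe, exists_eq_right, false_or, evalOP_coe, and_iff_right_iff_imp]
    exact (evalF_eq_iff_isRoot z w).1

lemma sum_locDeg_roots_fiberPoly (w : OnePoint ℂ) :
    ∑ z ∈ (fiberPoly f.num f.denom w).roots.toFinset, locDeg f z =
      (fiberPoly f.num f.denom w).natDegree := by
  rw [← sum_rootMultiplicity_roots_toFinset]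
  refine Finset.sum_congr rfl fun z hz => ?_
  rw [locDeg_coe, locDegF_eq_rootMultiplicity,
    (evalF_eq_iff_isRoot z w).2 (isRoot_of_mem_roots (Multiset.mem_toFinset.1 hz))]

lemma sum_locDeg_fiberFinset (hf : 0 < rdeg f) (w : OnePoint ℂ) :
    ∑ x ∈ fiberFinset f w, locDeg f x = rdeg f := by
  have hfin : ((fiberPoly f.num f.denom w).roots.toFinset.image (↑)).filter (evalOP f · = w) =
      (fiberPoly f.num f.denom w).roots.toFinset.image ((↑) : ℂ → OnePoint ℂ) :=
    Finset.filter_true_of_mem fun x hx => by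
      obtain ⟨z, hz, rfl⟩ := Finset.mem_image.1 hx
      exact (evalF_eq_iff_isRoot z w).2 (isRoot_of_mem_roots (Multiset.mem_toFinset.1 hz))
  rw [fiberFinset, Finset.filter_insert]
  by_cases h : evalOP f ∞ = w
  · have hlt := natDegree_fiberPoly_evalOP_infty_lt hf
    rw [h] at hlt
    rw [if_pos h, Finset.sum_insert (by simp), hfin, Finset.sum_image OnePoint.coe_injective.injOn,
      sum_locDeg_roots_fiberPoly, locDeg_infty hf, h]
    omega
  · rw [if_neg h, hfin, Finset.sum_image OnePoint.coe_injective.injOn, sum_locDeg_roots_fiberPoly]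
    exact le_antisymm (natDegree_fiberPoly_le f w)
      (le_natDegree_of_ne_zero ((evalOP_infty_eq_iff f w).not.1 h))

end Fibers

section RiemannHurwitz

variable {f : RatFunc ℂ}

lemma locDeg_coe_eq_rootMultiplicity_wronskian_add_one (hf : 0 < rdeg f) (z : ℂ) :
    locDeg f z = rootMultiplicity z (wronskian f.num f.denom) + 1 := by
  have hroot : (fiberPoly f.num f.denom (evalF f z)).IsRoot z := (evalF_eq_iff_isRoot z _).1 rfl
  rw [locDeg_coe, locDegF_eq_rootMultiplicity]
  induction h : evalF f z using OnePoint.rec with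
  | infty =>
    rw [h] at hroot
    exact (rootMultiplicity_wronskian_add_one f.denom_ne_zero hroot
      (RatFunc.not_isRoot_num_of_isRoot_denom hroot)).symm
  | coe c =>
    rw [h] at hroot
    have hden : ¬ f.denom.IsRoot z := fun hd => RatFunc.not_isRoot_num_of_isRoot_denom hd
      (by simpa [hd.eq_zero] using hroot)
    rw [← wronskian_sub_C_mul_left f.num f.denom c, ← wronskian_neg_eq, rootMultiplicity_neg]
    exact (rootMultiplicity_wronskian_add_one (fiberPoly_ne_zero hf c) hroot hden).symm

lemma wronskian_ne_zero_and_natDegree_add_locDeg_infty (hf : 0 < rdeg f) :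
    wronskian f.num f.denom ≠ 0 ∧
      (wronskian f.num f.denom).natDegree + locDeg f ∞ = 2 * rdeg f - 1 := by
  have hlt := natDegree_fiberPoly_evalOP_infty_lt hf
  rw [locDeg_infty hf]
  induction h : evalOP f ∞ using OnePoint.rec with
  | infty =>
    rw [h, fiberPoly_infty] at hlt
    rw [fiberPoly_infty]
    have hnum : f.num.natDegree = rdeg f := by simp only [rdeg] at hlt ⊢; omega
    have hnum0 : f.num ≠ 0 := fun h0 => by simp [h0] at hnum; omega
    obtain ⟨hW, hdeg⟩ := natDegree_wronskian hnum0 f.denom_ne_zero (by omega)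
    exact ⟨hW, by omega⟩
  | coe c =>
    rw [h, fiberPoly_coe] at hlt
    rw [fiberPoly_coe]
    have hden : f.denom.natDegree = rdeg f := le_antisymm (le_max_right _ _)
      (le_natDegree_of_ne_zero ((evalOP_infty_eq_iff f ∞).not.1 (by simp [h])))
    obtain ⟨hW0, hdeg⟩ := natDegree_wronskian (fiberPoly_ne_zero hf c) f.denom_ne_zero
      (by simp only [fiberPoly_coe]; omega)
    rw [← wronskian_sub_C_mul_left f.num f.denom c]
    exact ⟨hW0, by simp only [fiberPoly_coe] at hdeg; omega⟩

lemma support_locDeg_sub_one_subset (hf : 0 < rdeg f) :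
    Function.support (fun x => locDeg f x - 1) ⊆
      ↑(insert ∞ ((wronskian f.num f.denom).roots.toFinset.image ((↑) : ℂ → OnePoint ℂ))) := by
  have hW := (wronskian_ne_zero_and_natDegree_add_locDeg_infty hf).1
  intro x hx
  induction x using OnePoint.rec with
  | infty => simp
  | coe z =>
    have hz : rootMultiplicity z (wronskian f.num f.denom) ≠ 0 := by
      simpa [locDeg_coe_eq_rootMultiplicity_wronskian_add_one hf] using hx
    simpa [hW] using (rootMultiplicity_pos hW).1 (Nat.pos_of_ne_zero hz)

theorem finsum_locDeg_sub_one (hf : 0 < rdeg f) :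
    ∑ᶠ x, (locDeg f x - 1) = 2 * rdeg f - 2 := by
  have hdeg := (wronskian_ne_zero_and_natDegree_add_locDeg_infty hf).2
  have hroots : ∑ z ∈ (wronskian f.num f.denom).roots.toFinset, (locDeg f z - 1) =
      (wronskian f.num f.denom).natDegree := by
    rw [← sum_rootMultiplicity_roots_toFinset]
    refine Finset.sum_congr rfl fun z _ => ?_
    rw [locDeg_coe_eq_rootMultiplicity_wronskian_add_one hf, Nat.add_sub_cancel]
  have h1 := one_le_locDeg hf ∞
  rw [finsum_eq_sum_of_support_subset _ (support_locDeg_sub_one_subset hf),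
    Finset.sum_insert (by simp), Finset.sum_image OnePoint.coe_injective.injOn, hroots]
  omega

end RiemannHurwitz

section Pullback

variable {f : RatFunc ℂ}

lemma finite_preimage_evalOP (hf : 0 < rdeg f) {s : Set (OnePoint ℂ)} (hs : s.Finite) :
    (evalOP f ⁻¹' s).Finite :=
  (hs.toFinset.biUnion (fiberFinset f)).finite_toSet.subset fun x hx => by
    simpa [mem_fiberFinset hf] using hx

lemma hasFiniteSupport_locDeg_mul_comp {R : Type*} [Semiring R] (hf : 0 < rdeg f)
    {φ : OnePoint ℂ → R} (hφ : φ.HasFiniteSupport) :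
    (fun x => (locDeg f x : R) * φ (evalOP f x)).HasFiniteSupport :=
  (finite_preimage_evalOP hf hφ).subset fun _ hx => right_ne_zero_of_mul hx

theorem finsum_locDeg_mul_comp {R : Type*} [Semiring R] (hf : 0 < rdeg f)
    {φ : OnePoint ℂ → R} (hφ : φ.HasFiniteSupport) :
    ∑ᶠ x, (locDeg f x : R) * φ (evalOP f x) = rdeg f * ∑ᶠ w, φ w := by
  have hdisj : (hφ.toFinset : Set (OnePoint ℂ)).PairwiseDisjoint (fiberFinset f) :=
    fun w₁ _ w₂ _ hne => Finset.disjoint_left.2 fun x h₁ h₂ =>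
      hne (((mem_fiberFinset hf).1 h₁).symm.trans ((mem_fiberFinset hf).1 h₂))
  have hsupp : Function.support (fun x => (locDeg f x : R) * φ (evalOP f x)) ⊆
      ↑(hφ.toFinset.biUnion (fiberFinset f)) := fun x hx =>
    Finset.mem_biUnion.2 ⟨evalOP f x, hφ.mem_toFinset.2 (right_ne_zero_of_mul hx),
      (mem_fiberFinset hf).2 rfl⟩
  rw [finsum_eq_sum_of_support_subset _ hsupp,
    finsum_eq_sum_of_support_subset φ (s := hφ.toFinset) fun x hx => hφ.mem_toFinset.2 hx,
    Finset.sum_biUnion hdisj, Finset.mul_sum]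
  refine Finset.sum_congr rfl fun w _ => ?_
  rw [Finset.sum_congr rfl fun x hx => by rw [(mem_fiberFinset hf).1 hx], ← Finset.sum_mul,
    ← Nat.cast_sum, sum_locDeg_fiberFinset hf]

end Pullback

@[ext]
lemma Orbifold.ext {O₁ O₂ : Orbifold} (h : O₁.nu = O₂.nu) : O₁ = O₂ := by
  cases O₁; cases O₂; cases h; rfl

lemma Orbifold.hasFiniteSupport_inv_nu_sub_one (O : Orbifold) :
    (fun z => (O.nu z : ℚ)⁻¹ - 1).HasFiniteSupport :=
  O.finite.subset fun z hz h1 => hz (by simp [h1])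

lemma Orbifold.eulerChar_eq_two_add_finsum (O : Orbifold) :
    O.eulerChar = 2 + ∑ᶠ z, ((O.nu z : ℚ)⁻¹ - 1) := by
  rw [Orbifold.eulerChar, finsum_eq_sum_of_support_subset _ (s := O.finite.toFinset)
    fun z hz => O.finite.mem_toFinset.2 fun h1 => hz (by simp [h1])]

def eulerDefect (f : RatFunc ℂ) (O₁ O₂ : Orbifold) (z : OnePoint ℂ) : ℚ :=
  (O₁.nu z : ℚ)⁻¹ - locDeg f z * (O₂.nu (evalOP f z) : ℚ)⁻¹

section EulerDefect

variable {f : RatFunc ℂ} {O₁ O₂ : Orbifold}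

lemma eulerDefect_eq (f : RatFunc ℂ) (O₁ O₂ : Orbifold) (z : OnePoint ℂ) :
    eulerDefect f O₁ O₂ z = ((O₁.nu z : ℚ)⁻¹ - 1) -
      locDeg f z * ((O₂.nu (evalOP f z) : ℚ)⁻¹ - 1) - ((locDeg f z : ℚ) - 1) := by
  rw [eulerDefect]; ring

lemma cast_locDeg_sub_one (hf : 0 < rdeg f) (x : OnePoint ℂ) :
    (locDeg f x : ℚ) - 1 = ((locDeg f x - 1 : ℕ) : ℚ) := by
  rw [Nat.cast_sub (one_le_locDeg hf x), Nat.cast_one]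

lemma hasFiniteSupport_locDeg_sub_one (hf : 0 < rdeg f) :
    (fun x => locDeg f x - 1).HasFiniteSupport :=
  (Finset.finite_toSet _).subset (support_locDeg_sub_one_subset hf)

lemma hasFiniteSupport_cast_locDeg_sub_one (hf : 0 < rdeg f) :
    (fun x => (locDeg f x : ℚ) - 1).HasFiniteSupport :=
  (hasFiniteSupport_locDeg_sub_one hf).subset fun x hx h0 =>
    hx <| by simp only at h0 ⊢; rw [cast_locDeg_sub_one hf, h0, Nat.cast_zero]

lemma finsum_cast_locDeg_sub_one (hf : 0 < rdeg f) :
    ∑ᶠ x, ((locDeg f x : ℚ) - 1) = 2 * rdeg f - 2 := by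
  have hcast := (Nat.castAddMonoidHom ℚ).map_finsum (hasFiniteSupport_locDeg_sub_one hf)
  simp only [Nat.coe_castAddMonoidHom] at hcast
  rw [finsum_congr (cast_locDeg_sub_one hf), ← hcast, finsum_locDeg_sub_one hf,
    Nat.cast_sub (by omega)]
  push_cast; ring

lemma hasFiniteSupport_eulerDefect (hf : 0 < rdeg f) (O₁ O₂ : Orbifold) :
    (eulerDefect f O₁ O₂).HasFiniteSupport := by
  simpa only [← eulerDefect_eq] using (O₁.hasFiniteSupport_inv_nu_sub_one.fun_sub
    (hasFiniteSupport_locDeg_mul_comp hf O₂.hasFiniteSupport_inv_nu_sub_one)).fun_sub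
    (hasFiniteSupport_cast_locDeg_sub_one hf)

theorem finsum_eulerDefect (hf : 0 < rdeg f) (O₁ O₂ : Orbifold) :
    ∑ᶠ z, eulerDefect f O₁ O₂ z = O₁.eulerChar - rdeg f * O₂.eulerChar := by
  have h₁ := O₁.hasFiniteSupport_inv_nu_sub_one
  have h₂ := hasFiniteSupport_locDeg_mul_comp hf O₂.hasFiniteSupport_inv_nu_sub_one
  rw [finsum_congr (eulerDefect_eq f O₁ O₂),
    finsum_sub_distrib (h₁.fun_sub h₂) (hasFiniteSupport_cast_locDeg_sub_one hf),
    finsum_sub_distrib h₁ h₂, finsum_locDeg_mul_comp hf O₂.hasFiniteSupport_inv_nu_sub_one,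
    finsum_cast_locDeg_sub_one hf, O₁.eulerChar_eq_two_add_finsum,
    O₂.eulerChar_eq_two_add_finsum]
  ring

end EulerDefect

section MinimalHolomorphic

variable {f : RatFunc ℂ} {O₁ O₂ : Orbifold}

lemma IsMinHolo.inv_nu_eq (h : IsMinHolo f O₁ O₂) (z : OnePoint ℂ) :
    (O₁.nu z : ℚ)⁻¹ =
      Nat.gcd (locDeg f z) (O₂.nu (evalOP f z)) * (O₂.nu (evalOP f z) : ℚ)⁻¹ := by
  have h₁ : (O₁.nu z : ℚ) ≠ 0 := by have := O₁.one_le z; positivity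
  have h₂ : (Nat.gcd (locDeg f z) (O₂.nu (evalOP f z)) : ℚ) ≠ 0 := by
    have := O₂.one_le (evalOP f z)
    exact_mod_cast (Nat.gcd_pos_of_pos_right _ this).ne'
  have hν : (O₂.nu (evalOP f z) : ℚ) = O₁.nu z * Nat.gcd (locDeg f z) (O₂.nu (evalOP f z)) := by
    exact_mod_cast h z
  rw [hν]
  field_simp

lemma IsMinHolo.eulerDefect_nonpos (hf : 0 < rdeg f) (h : IsMinHolo f O₁ O₂)
    (z : OnePoint ℂ) : eulerDefect f O₁ O₂ z ≤ 0 := by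
  rw [eulerDefect, h.inv_nu_eq, sub_nonpos]
  gcongr
  exact_mod_cast Nat.gcd_le_left _ (one_le_locDeg hf z)

lemma IsMinHolo.eq_mul_locDeg_of_eulerDefect_eq_zero (h : IsMinHolo f O₁ O₂) {z : OnePoint ℂ}
    (hz : eulerDefect f O₁ O₂ z = 0) : O₂.nu (evalOP f z) = O₁.nu z * locDeg f z := by
  have hν : (O₂.nu (evalOP f z) : ℚ)⁻¹ ≠ 0 := by have := O₂.one_le (evalOP f z); positivity
  rw [eulerDefect, h.inv_nu_eq, sub_eq_zero] at hz
  have hgcd : Nat.gcd (locDeg f z) (O₂.nu (evalOP f z)) = locDeg f z := by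
    exact_mod_cast mul_right_cancel₀ hν hz
  rw [← hgcd, ← h z]

theorem IsMinHolo.isCovering_of_eulerChar_eq (hf : 0 < rdeg f) (h : IsMinHolo f O₁ O₂)
    (hχ : O₁.eulerChar = rdeg f * O₂.eulerChar) : IsCovering f O₁ O₂ := fun z => by
  have hle := single_le_finsum z (hasFiniteSupport_eulerDefect hf O₁ O₂).neg
    fun y => neg_nonneg.2 (h.eulerDefect_nonpos hf y)
  simp only [Pi.neg_apply] at hle
  rw [finsum_neg_distrib, finsum_eulerDefect hf, hχ, sub_self, neg_zero, neg_nonpos] at hle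
  exact h.eq_mul_locDeg_of_eulerDefect_eq_zero (le_antisymm (h.eulerDefect_nonpos hf z) hle)

end MinimalHolomorphic

theorem finsum_eq_zero_of_locDeg_mul_comp_eq {f : RatFunc ℂ} (hf : 2 ≤ rdeg f)
    {R : Type*} [Ring R] [NoZeroDivisors R] [CharZero R] {φ : OnePoint ℂ → R}
    (hφ : φ.HasFiniteSupport) (hpull : ∀ z, (locDeg f z : R) * φ (evalOP f z) = φ z) :
    ∑ᶠ z, φ z = 0 := by
  have h := finsum_locDeg_mul_comp (f := f) (by omega) hφ
  simp only [hpull] at h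
  have hd : (rdeg f : R) - 1 ≠ 0 := sub_ne_zero.2 (by exact_mod_cast (by omega : rdeg f ≠ 1))
  refine (mul_eq_zero.1 ?_).resolve_left hd
  rw [sub_mul, one_mul, ← h, sub_self]

lemma Orbifold.finite_setOf_nu_ne (O₁ O₂ : Orbifold) : {z | O₁.nu z ≠ O₂.nu z}.Finite :=
  (O₁.finite.union O₂.finite).subset fun z hz => by
    by_contra h
    simp only [Set.mem_union, Set.mem_ofPred_eq, not_or, not_not] at h
    exact hz (h.1.trans h.2.symm)

section Covering

variable {f : RatFunc ℂ} {O O₁ O₂ : Orbifold}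

lemma IsCovering.locDeg_mul_inv_nu (hf : 0 < rdeg f) (h : IsCovering f O O) (z : OnePoint ℂ) :
    (locDeg f z : ℚ) * (O.nu (evalOP f z) : ℚ)⁻¹ = (O.nu z : ℚ)⁻¹ := by
  have : (locDeg f z : ℚ) ≠ 0 := by have := one_le_locDeg hf z; positivity
  rw [h z]
  push_cast
  field_simp

lemma IsCovering.nu_evalOP_eq_iff (hf : 0 < rdeg f) (h₁ : IsCovering f O₁ O₁)
    (h₂ : IsCovering f O₂ O₂) (z : OnePoint ℂ) :
    O₁.nu (evalOP f z) = O₂.nu (evalOP f z) ↔ O₁.nu z = O₂.nu z := by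
  rw [h₁ z, h₂ z]
  exact Nat.mul_left_inj (Nat.pos_iff_ne_zero.1 (one_le_locDeg hf z))

theorem IsCovering.eq_of_isCovering (hf : 2 ≤ rdeg f) (h₁ : IsCovering f O₁ O₁)
    (h₂ : IsCovering f O₂ O₂) : O₁ = O₂ := by
  have hf₀ : 0 < rdeg f := by omega
  set D := {z | O₁.nu z ≠ O₂.nu z}
  have hinv : ∀ z, evalOP f z ∈ D ↔ z ∈ D := fun z => (h₁.nu_evalOP_eq_iff hf₀ h₂ z).not
  have hφ : (D.indicator fun z => (O₁.nu z : ℚ)⁻¹).HasFiniteSupport :=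
    (O₁.finite_setOf_nu_ne O₂).subset Set.support_indicator_subset
  have hsum := finsum_eq_zero_of_locDeg_mul_comp_eq hf hφ fun z => by
    by_cases hz : z ∈ D
    · rw [Set.indicator_of_mem ((hinv z).2 hz), Set.indicator_of_mem hz,
        h₁.locDeg_mul_inv_nu hf₀]
    · rw [Set.indicator_of_notMem (mt (hinv z).1 hz), Set.indicator_of_notMem hz, mul_zero]
  ext z
  by_contra hz
  have hle := single_le_finsum z hφ (Set.indicator_nonneg fun z _ => by positivity)
  rw [hsum, Set.indicator_of_mem hz] at hle
  have hpos : (0 : ℚ) < (O₁.nu z : ℚ)⁻¹ := by have := O₁.one_le z; positivity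
  linarith

end Covering

theorem unique_euler_zero_orbifold_general (A : RatFunc ℂ) (hA : 2 ≤ rdeg A)
    (O₁ O₂ : Orbifold)
    (hχ₁ : O₁.eulerChar = 0) (hχ₂ : O₂.eulerChar = 0)
    (hm₁ : IsMinHolo A O₁ O₁) (hm₂ : IsMinHolo A O₂ O₂) :
    O₁ = O₂ :=
  IsCovering.eq_of_isCovering hA (hm₁.isCovering_of_eulerChar_eq (by omega) (by simp [hχ₁]))
    (hm₂.isCovering_of_eulerChar_eq (by omega) (by simp [hχ₂]))

/-- **Theorem (uniqueness of the parabolic orbifold).** For a rational map `A` of degree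
at least two there is at most one orbifold `O` with `χ(O) = 0` such that `A : O → O` is a
minimal holomorphic map between orbifolds. -/
theorem unique_euler_zero_orbifold (A : RatFunc ℂ) (hA : 2 ≤ rdeg A)
    (O₁ O₂ : Orbifold) (h₁ : O₁.Good) (h₂ : O₂.Good)
    (hχ₁ : O₁.eulerChar = 0) (hχ₂ : O₂.eulerChar = 0)
    (hm₁ : IsMinHolo A O₁ O₁) (hm₂ : IsMinHolo A O₂ O₂) :
    O₁ = O₂ :=
  unique_euler_zero_orbifold_general A hA O₁ O₂ hχ₁ hχ₂ hm₁ hm₂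

end GenLattes
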